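/- (Cauchy–Schwarz bound for decision trees.) Let G=(V,E) be a finite simple graph, let μ be the Bernoulli bond-percolation product measure on Ω={0,1}^E, and let (C₁,C₂) be sampled from μ×μ. Let T₁ and T₂ be decision trees for pairs of configurations such that T₂ continues T₁, every node of T₁ has decision S, T₁ decides an event A⊆Ω, and T₂ decides an event B⊆Ω, where B=A∩M for some event M⊆Ω that is closed upward or closed downward, and μ(A)>0. Let S₂=S₂(C₁,C₂) be the edge set built by T₂. Then P(C₁∈B and C₁→_{S₂} C₂∈B) ≥ μ(B)²/μ(A). -/

import Mathlib

/-!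
Every node of `T₁` puts its edge into `S₂`, so `C₁ →_{S₂} C₂` agrees with `C₁` on the edges
that `T₁` reveals: given the leaf of `T₁` that is reached, either both configurations lie in `A`
or neither does. Below a leaf where `A` holds, a Harris-type inequality along the rest of `T₂`
gives `P(C₁ ∈ M, C₁ →_{S₂} C₂ ∈ M) ≥ μ(M)²` for the conditioned measure: at a node deciding `S̄`
the two configurations use independent bits, at a node deciding `S` they share one and
Chebyshev's inequality for the monotone event `M` applies. Summing over the leaves of `T₁` with
the Cauchy–Schwarz inequality gives `μ(A ∩ M)² ≤ μ(A) · P(C₁ ∈ B, C₁ →_{S₂} C₂ ∈ B)`.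

Both inductions condition on the edge `e` at the root, replacing each event `X` by its sections
`{C | C[e ↦ b] ∈ X}`, which are again decided by the subtrees and monotone like `X`.
-/

namespace DTPerc

variable {E : Type*} [Fintype E] [DecidableEq E]

/-- Bernoulli product weight of a configuration. -/
noncomputable def wt (p : E → ℝ) (C : E → Bool) : ℝ :=
  ∏ e, if C e then p e else 1 - p e

/-- Probability of an event under the Bernoulli product measure. -/
noncomputable def Pr (p : E → ℝ) (A : Set (E → Bool)) : ℝ :=
  ∑ C : E → Bool, A.indicator (wt p) C

/-- Probability of an event for an independent pair `(C₁, C₂) ~ μ × μ`. -/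
noncomputable def Pr2 (p : E → ℝ) (A : Set ((E → Bool) × (E → Bool))) : ℝ :=
  ∑ x : (E → Bool) × (E → Bool), A.indicator (fun y => wt p y.1 * wt p y.2) x

/-- A decision tree for pairs of configurations: every decision node queries an edge,
decides whether it goes to `S` (`toS = true`) or to `S̄`, and has four children indexed
by the pair of revealed values of the edge in the two configurations. -/
inductive PairTree (E : Type u) : Type u
  | leaf : PairTree E
  | node (e : E) (toS : Bool) (child : Bool → Bool → PairTree E) : PairTree E

/-- The edges queried along any root-to-leaf path are pairwise distinct
(`used` is the set of edges already queried above the current node). -/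
def PairTree.valid : PairTree E → Finset E → Prop
  | .leaf, _ => True
  | .node e _ child, used =>
      e ∉ used ∧ ∀ b₁ b₂ : Bool, (child b₁ b₂).valid (insert e used)

/-- The set `S(C₁, C₂)` built by the decision tree. -/
def PairTree.buildS : PairTree E → (E → Bool) → (E → Bool) → Finset E
  | .leaf, _, _ => ∅
  | .node e toS child, C₁, C₂ =>
      let rest := (child (C₁ e) (C₂ e)).buildS C₁ C₂
      if toS then insert e rest else rest

/-- `C₁ →_S C₂`: the configuration equal to `C₁` on `S` and to `C₂` off `S`. -/
def splice (S : Finset E) (C₁ C₂ : E → Bool) : E → Bool :=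
  fun e => if e ∈ S then C₁ e else C₂ e

/-- An event is closed upward if it is preserved by opening more edges. -/
def UpwardClosed (A : Set (E → Bool)) : Prop :=
  ∀ C₁ C₂ : E → Bool, C₁ ∈ A → (∀ e, C₁ e = true → C₂ e = true) → C₂ ∈ A

/-- An event is closed downward if it is preserved by closing more edges. -/
def DownwardClosed (A : Set (E → Bool)) : Prop :=
  ∀ C₁ C₂ : E → Bool, C₁ ∈ A → (∀ e, C₂ e = true → C₁ e = true) → C₂ ∈ A

/-- `Continues T₂ T₁`: `T₂` continues `T₁`, i.e. `T₁` is an ancestor-closed subtree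
of `T₂` with the same queried edges and decisions on shared nodes. -/
inductive Continues : PairTree E → PairTree E → Prop
  | leaf (T : PairTree E) : Continues T .leaf
  | node (e : E) (toS : Bool) (ch₂ ch₁ : Bool → Bool → PairTree E)
      (h : ∀ b₁ b₂ : Bool, Continues (ch₂ b₁ b₂) (ch₁ b₁ b₂)) :
      Continues (.node e toS ch₂) (.node e toS ch₁)

/-- Every node of the tree has decision `S`. -/
def PairTree.allS : PairTree E → Prop
  | .leaf => True
  | .node _ toS child => toS = true ∧ ∀ b₁ b₂ : Bool, (child b₁ b₂).allS

/-- The set of edges revealed by the tree on the pair `(C₁, C₂)`. -/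
def PairTree.revealed : PairTree E → (E → Bool) → (E → Bool) → Finset E
  | .leaf, _, _ => ∅
  | .node e _ child, C₁, C₂ => insert e ((child (C₁ e) (C₂ e)).revealed C₁ C₂)

/-- The tree `T` decides the event `A`: for every leaf, the values of `C₁`
revealed along the root-to-leaf path determine whether `C₁ ∈ A`. -/
def PairTree.Decides (T : PairTree E) (A : Set (E → Bool)) : Prop :=
  ∀ C₁ C₂ C₁' : E → Bool,
    (∀ e ∈ T.revealed C₁ C₂, C₁' e = C₁ e) → (C₁ ∈ A ↔ C₁' ∈ A)

end DTPerc

namespace DTPerc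

open Function Finset

section Weights

variable {E : Type*}

noncomputable def bitWt (p : E → ℝ) (e : E) (b : Bool) : ℝ := if b then p e else 1 - p e

lemma bitWt_nonneg {p : E → ℝ} (hp : ∀ e, 0 ≤ p e ∧ p e ≤ 1) (e : E) (b : Bool) :
    0 ≤ bitWt p e b := by
  cases b
  · exact sub_nonneg.2 (hp e).2
  · exact (hp e).1

lemma sum_bitWt (p : E → ℝ) (e : E) : ∑ b, bitWt p e b = 1 := by
  simp [bitWt]

variable [Fintype E] {p : E → ℝ}

lemma wt_eq_prod_bitWt (C : E → Bool) : wt p C = ∏ e, bitWt p e (C e) := rfl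

lemma wt_nonneg (hp : ∀ e, 0 ≤ p e ∧ p e ≤ 1) (C : E → Bool) : 0 ≤ wt p C :=
  prod_nonneg fun e _ => bitWt_nonneg hp e (C e)

variable [DecidableEq E]

lemma sum_wt : ∑ C, wt p C = 1 := by
  simp only [wt_eq_prod_bitWt, ← Fintype.prod_sum, sum_bitWt, prod_const_one]

lemma sum_wt_mul_eq_sum_update (e : E) (f : (E → Bool) → ℝ) :
    ∑ C, wt p C * f C = ∑ b, bitWt p e b * ∑ C, wt p C * f (update C e b) := by
  let Φ := Equiv.funSplitAt e Bool
  have hwt : ∀ b g, wt p (Φ.symm (b, g)) = bitWt p e b * ∏ j : {j // j ≠ e}, bitWt p j (g j) := by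
    intro b g
    rw [wt_eq_prod_bitWt, Fintype.prod_eq_mul_prod_subtype_ne _ e]
    simp only [Φ, Equiv.funSplitAt_symm_apply, dif_pos]
    congr 1
    exact Fintype.prod_congr _ _ fun j => by simp [j.2]
  have hupd : ∀ b b' g, update (Φ.symm (b', g)) e b = Φ.symm (b, g) := by
    intro b b' g
    funext j
    by_cases hj : j = e
    · subst hj; simp [Φ]
    · simp [Φ, hj]
  simp only [← Φ.symm.sum_comp, Fintype.sum_prod_type, hwt, hupd]
  simp_rw [mul_assoc, ← mul_sum, ← sum_mul, sum_bitWt, one_mul]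

end Weights

section Probability

variable {E : Type*} [Fintype E] [DecidableEq E] {p : E → ℝ}

lemma Pr_eq_sum_wt_mul (A : Set (E → Bool)) : Pr p A = ∑ C, wt p C * A.indicator 1 C :=
  sum_congr rfl fun C _ => by by_cases h : C ∈ A <;> simp [h]

lemma Pr2_eq_sum_wt_mul (S : Set ((E → Bool) × (E → Bool))) :
    Pr2 p S = ∑ C₁, wt p C₁ * ∑ C₂, wt p C₂ * S.indicator 1 (C₁, C₂) := by
  simp only [Pr2, Fintype.sum_prod_type, mul_sum]
  refine sum_congr rfl fun C₁ _ => sum_congr rfl fun C₂ _ => ?_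
  by_cases h : (C₁, C₂) ∈ S <;> simp [h]

lemma Pr_nonneg (hp : ∀ e, 0 ≤ p e ∧ p e ≤ 1) (A : Set (E → Bool)) : 0 ≤ Pr p A :=
  sum_nonneg fun C _ => Set.indicator_nonneg (fun C _ => wt_nonneg hp C) C

lemma Pr2_nonneg (hp : ∀ e, 0 ≤ p e ∧ p e ≤ 1) (S : Set ((E → Bool) × (E → Bool))) :
    0 ≤ Pr2 p S :=
  sum_nonneg fun x _ => Set.indicator_nonneg
    (fun x _ => mul_nonneg (wt_nonneg hp x.1) (wt_nonneg hp x.2)) x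

lemma Pr_mono (hp : ∀ e, 0 ≤ p e ∧ p e ≤ 1) {A B : Set (E → Bool)} (h : A ⊆ B) :
    Pr p A ≤ Pr p B :=
  sum_le_sum fun C _ => Set.indicator_le_indicator_of_subset h (fun C => wt_nonneg hp C) C

@[simp]
lemma Pr_empty : Pr p ∅ = 0 := by
  simp [Pr]

@[simp]
lemma Pr_univ : Pr p Set.univ = 1 := by
  simp [Pr, sum_wt]

lemma Pr2_prod (M M' : Set (E → Bool)) :
    Pr2 p {x | x.1 ∈ M ∧ x.2 ∈ M'} = Pr p M * Pr p M' := by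
  rw [Pr2_eq_sum_wt_mul, Pr_eq_sum_wt_mul, Pr_eq_sum_wt_mul, sum_mul_sum]
  simp only [mul_sum]
  refine sum_congr rfl fun C₁ _ => sum_congr rfl fun C₂ _ => ?_
  by_cases h₁ : C₁ ∈ M <;> by_cases h₂ : C₂ ∈ M' <;> simp [h₁, h₂]

lemma Pr_eq_sum_update (e : E) (A : Set (E → Bool)) :
    Pr p A = ∑ b, bitWt p e b * Pr p {C | update C e b ∈ A} := by
  rw [Pr_eq_sum_wt_mul, sum_wt_mul_eq_sum_update e]
  simp only [Pr_eq_sum_wt_mul]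
  rfl

lemma Pr2_eq_sum_update (e : E) (S : Set ((E → Bool) × (E → Bool))) :
    Pr2 p S = ∑ b₁, bitWt p e b₁ * ∑ b₂, bitWt p e b₂ *
      Pr2 p {x | (update x.1 e b₁, update x.2 e b₂) ∈ S} := by
  rw [Pr2_eq_sum_wt_mul, sum_wt_mul_eq_sum_update e]
  refine sum_congr rfl fun b₁ _ => congrArg _ ?_
  simp only [sum_wt_mul_eq_sum_update e (fun C₂ => S.indicator 1 (update _ e b₁, C₂)),
    Pr2_eq_sum_wt_mul, mul_sum]
  rw [sum_comm]
  exact sum_congr rfl fun b₂ _ => sum_congr rfl fun C₁ _ => sum_congr rfl fun C₂ _ =>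
    mul_left_comm _ _ _

end Probability

section Trees

variable {E : Type*} [DecidableEq E]

namespace PairTree

def spliced (T : PairTree E) (C₁ C₂ : E → Bool) : E → Bool :=
  splice (T.buildS C₁ C₂) C₁ C₂

@[simp]
lemma spliced_leaf (C₁ C₂ : E → Bool) : (leaf : PairTree E).spliced C₁ C₂ = C₂ := by
  funext x
  simp [spliced, buildS, splice]

lemma not_mem_buildS {T : PairTree E} {U : Finset E} (hT : T.valid U) {e : E} (he : e ∈ U)
    (C₁ C₂ : E → Bool) : e ∉ T.buildS C₁ C₂ := by
  induction T generalizing U with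
  | leaf => simp [buildS]
  | node f toS child ih =>
    have hfe : e ≠ f := fun h => hT.1 (h ▸ he)
    have hrest := ih _ _ (hT.2 (C₁ f) (C₂ f)) (Finset.mem_insert_of_mem he)
    cases toS <;> simp [buildS, hfe, hrest]

lemma revealed_update {T : PairTree E} {U : Finset E} (hT : T.valid U) {e : E} (he : e ∈ U)
    (b₁ b₂ : Bool) (C₁ C₂ : E → Bool) :
    T.revealed (update C₁ e b₁) (update C₂ e b₂) = T.revealed C₁ C₂ := by
  induction T generalizing U with
  | leaf => rfl
  | node f toS child ih =>
    have hfe : f ≠ e := fun h => hT.1 (h ▸ he)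
    simp only [revealed, update_of_ne hfe,
      ih _ _ (hT.2 (C₁ f) (C₂ f)) (Finset.mem_insert_of_mem he)]

lemma buildS_update {T : PairTree E} {U : Finset E} (hT : T.valid U) {e : E} (he : e ∈ U)
    (b₁ b₂ : Bool) (C₁ C₂ : E → Bool) :
    T.buildS (update C₁ e b₁) (update C₂ e b₂) = T.buildS C₁ C₂ := by
  induction T generalizing U with
  | leaf => rfl
  | node f toS child ih =>
    have hfe : f ≠ e := fun h => hT.1 (h ▸ he)
    simp only [buildS, update_of_ne hfe,
      ih _ _ (hT.2 (C₁ f) (C₂ f)) (Finset.mem_insert_of_mem he)]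

lemma spliced_node_update {e : E} {toS : Bool} {child : Bool → Bool → PairTree E}
    {U : Finset E} (hT : (node e toS child).valid U) (b₁ b₂ : Bool) (C₁ C₂ : E → Bool) :
    (node e toS child).spliced (update C₁ e b₁) (update C₂ e b₂)
      = update ((child b₁ b₂).spliced C₁ C₂) e (if toS then b₁ else b₂) := by
  have hchild := hT.2 b₁ b₂
  have he := Finset.mem_insert_self e U
  funext x
  by_cases hx : x = e
  · subst hx
    cases toS <;> simp [spliced, splice, buildS, not_mem_buildS hchild he]
  · have hS : x ∈ (node e toS child).buildS (update C₁ e b₁) (update C₂ e b₂)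
        ↔ x ∈ (child b₁ b₂).buildS C₁ C₂ := by
      cases toS <;> simp [buildS, hx, buildS_update hchild he]
    simp only [spliced, splice, hS, update_of_ne hx]

lemma Decides.leaf {A : Set (E → Bool)} (h : (leaf : PairTree E).Decides A) :
    A = ∅ ∨ A = Set.univ := by
  by_cases hA : A.Nonempty
  · obtain ⟨C, hC⟩ := hA
    exact Or.inr (Set.eq_univ_of_forall fun C' => (h C C C' (by simp [revealed])).1 hC)
  · exact Or.inl (Set.not_nonempty_iff_eq_empty.1 hA)

lemma Decides.child {e : E} {toS : Bool} {child : Bool → Bool → PairTree E} {U : Finset E}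
    (hT : (node e toS child).valid U) {A : Set (E → Bool)} (h : (node e toS child).Decides A)
    (b₁ b₂ : Bool) : (child b₁ b₂).Decides {C | update C e b₁ ∈ A} := by
  intro C₁ C₂ C₁' hagree
  refine h (update C₁ e b₁) (update C₂ e b₂) (update C₁' e b₁) fun f hf => ?_
  simp only [revealed, update_self, revealed_update (hT.2 b₁ b₂) (Finset.mem_insert_self e U),
    Finset.mem_insert] at hf
  by_cases hfe : f = e
  · simp [hfe]
  · simp only [update_of_ne hfe]
    exact hagree f (hf.resolve_left hfe)

end PairTree

lemma Continues.valid {T₂ T₁ : PairTree E} (h : Continues T₂ T₁) {U : Finset E}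
    (hT₂ : T₂.valid U) : T₁.valid U := by
  induction h generalizing U with
  | leaf => trivial
  | node e toS ch₂ ch₁ _ ih => exact ⟨hT₂.1, fun b₁ b₂ => ih b₁ b₂ (hT₂.2 b₁ b₂)⟩

end Trees

section Monotone

variable {E : Type*} [DecidableEq E]

lemma UpwardClosed.preimage_update {M : Set (E → Bool)} (hM : UpwardClosed M) (e : E)
    (b : Bool) : UpwardClosed {C | update C e b ∈ M} := by
  refine fun C₁ C₂ h hle => hM _ _ h fun f hf => ?_
  by_cases hfe : f = e
  · subst hfe; simpa using hf
  · simp only [update_of_ne hfe] at hf ⊢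
    exact hle f hf

lemma DownwardClosed.preimage_update {M : Set (E → Bool)} (hM : DownwardClosed M) (e : E)
    (b : Bool) : DownwardClosed {C | update C e b ∈ M} := by
  refine fun C₁ C₂ h hle => hM _ _ h fun f hf => ?_
  by_cases hfe : f = e
  · subst hfe; simpa using hf
  · simp only [update_of_ne hfe] at hf ⊢
    exact hle f hf

lemma UpwardClosed.update_false_subset {M : Set (E → Bool)} (hM : UpwardClosed M) (e : E) :
    {C | update C e false ∈ M} ⊆ {C | update C e true ∈ M} := by
  refine fun C h => hM _ _ h fun f hf => ?_
  by_cases hfe : f = e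
  · simp [hfe]
  · simpa [update_of_ne hfe] using hf

lemma DownwardClosed.update_true_subset {M : Set (E → Bool)} (hM : DownwardClosed M) (e : E) :
    {C | update C e true ∈ M} ⊆ {C | update C e false ∈ M} := by
  refine fun C h => hM _ _ h fun f hf => ?_
  by_cases hfe : f = e
  · simp [hfe] at hf
  · simpa [update_of_ne hfe] using hf

def Comonotone (M M' : Set (E → Bool)) : Prop :=
  (UpwardClosed M ∧ UpwardClosed M') ∨ (DownwardClosed M ∧ DownwardClosed M')

lemma Comonotone.preimage_update {M M' : Set (E → Bool)} (h : Comonotone M M') (e : E)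
    (b b' : Bool) : Comonotone {C | update C e b ∈ M} {C | update C e b' ∈ M'} :=
  h.imp (fun h => ⟨h.1.preimage_update e b, h.2.preimage_update e b'⟩)
    (fun h => ⟨h.1.preimage_update e b, h.2.preimage_update e b'⟩)

variable [Fintype E] {p : E → ℝ}

lemma Comonotone.Pr_update_covariance_nonneg (hp : ∀ e, 0 ≤ p e ∧ p e ≤ 1)
    {M M' : Set (E → Bool)} (h : Comonotone M M') (e : E) :
    0 ≤ (Pr p {C | update C e true ∈ M} - Pr p {C | update C e false ∈ M}) *
      (Pr p {C | update C e true ∈ M'} - Pr p {C | update C e false ∈ M'}) := by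
  rcases h with ⟨hM, hM'⟩ | ⟨hM, hM'⟩
  · exact mul_nonneg (sub_nonneg.2 (Pr_mono hp (hM.update_false_subset e)))
      (sub_nonneg.2 (Pr_mono hp (hM'.update_false_subset e)))
  · exact mul_nonneg_of_nonpos_of_nonpos (sub_nonpos.2 (Pr_mono hp (hM.update_true_subset e)))
      (sub_nonpos.2 (Pr_mono hp (hM'.update_true_subset e)))

end Monotone

section Inequalities

lemma sum_bool_mul_sum_le_of_sum_eq_one {w x y : Bool → ℝ} (hw : ∀ b, 0 ≤ w b)
    (hw₁ : ∑ b, w b = 1) (hxy : 0 ≤ (x true - x false) * (y true - y false)) :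
    (∑ b, w b * x b) * (∑ b, w b * y b) ≤ ∑ b, w b * (x b * y b) := by
  simp only [Fintype.sum_bool] at hw₁ ⊢
  calc (w true * x true + w false * x false) * (w true * y true + w false * y false)
      = w true * (x true * y true) + w false * (x false * y false)
        - w true * w false * ((x true - x false) * (y true - y false)) := by
        linear_combination (w true * (x true * y true) + w false * (x false * y false)) * hw₁
    _ ≤ w true * (x true * y true) + w false * (x false * y false) :=
        sub_le_self _ (mul_nonneg (mul_nonneg (hw true) (hw false)) hxy)

lemma sq_sum_mul_le_sum_mul_mul_sum {ι : Type*} (s : Finset ι) {w a b l : ι → ℝ}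
    (hw : ∀ i ∈ s, 0 ≤ w i) (ha : ∀ i ∈ s, 0 ≤ a i) (hl : ∀ i ∈ s, 0 ≤ l i)
    (h : ∀ i ∈ s, b i ^ 2 ≤ a i * l i) :
    (∑ i ∈ s, w i * b i) ^ 2 ≤ (∑ i ∈ s, w i * a i) * ∑ i ∈ s, w i * l i :=
  sum_sq_le_sum_mul_sum_of_sq_le_mul s (fun i hi => mul_nonneg (hw i hi) (ha i hi))
    (fun i hi => mul_nonneg (hw i hi) (hl i hi)) fun i hi => by
      rw [mul_pow, mul_mul_mul_comm, ← sq]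
      exact mul_le_mul_of_nonneg_left (h i hi) (sq_nonneg _)

end Inequalities

section Correlation

variable {E : Type*} [Fintype E] [DecidableEq E] {p : E → ℝ}

theorem Pr_mul_Pr_le_Pr2_spliced (hp : ∀ e, 0 ≤ p e ∧ p e ≤ 1) {T : PairTree E}
    {U : Finset E} (hT : T.valid U) {M M' : Set (E → Bool)} (hMM' : Comonotone M M') :
    Pr p M * Pr p M' ≤ Pr2 p {x | x.1 ∈ M ∧ T.spliced x.1 x.2 ∈ M'} := by
  induction T generalizing U M M' with
  | leaf => simp [Pr2_prod]
  | node e toS child ih =>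
    have hsection : ∀ b₁ b₂,
        {x : (E → Bool) × (E → Bool) | (update x.1 e b₁, update x.2 e b₂) ∈
          {x | x.1 ∈ M ∧ (PairTree.node e toS child).spliced x.1 x.2 ∈ M'}}
        = {x | x.1 ∈ {C | update C e b₁ ∈ M} ∧ (child b₁ b₂).spliced x.1 x.2 ∈
          {C | update C e (if toS then b₁ else b₂) ∈ M'}} := by
      intro b₁ b₂
      ext x
      simp only [Set.mem_ofPred_eq, PairTree.spliced_node_update hT]
    rw [Pr_eq_sum_update e M, Pr_eq_sum_update e M', Pr2_eq_sum_update e]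
    simp only [hsection]
    have hw := bitWt_nonneg hp e
    calc _ ≤ ∑ b₁, bitWt p e b₁ * ∑ b₂, bitWt p e b₂ *
          (Pr p {C | update C e b₁ ∈ M} *
            Pr p {C | update C e (if toS then b₁ else b₂) ∈ M'}) := by
          -- at an `S̄` node the two bits at `e` are independent, at an `S` node they coincide
          cases toS
          · rw [sum_mul_sum]
            simp only [Bool.false_eq_true, if_false, mul_sum]
            exact le_of_eq (sum_congr rfl fun _ _ => sum_congr rfl fun _ _ => by ring)
          · simp only [if_true, ← sum_mul, sum_bitWt, one_mul]
            exact sum_bool_mul_sum_le_of_sum_eq_one hw (sum_bitWt p e)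
              (hMM'.Pr_update_covariance_nonneg hp e)
      _ ≤ _ := by
          gcongr with b₁ _ b₂ _
          · exact hw b₁
          · exact hw b₂
          · exact ih b₁ b₂ (hT.2 b₁ b₂) (hMM'.preimage_update e _ _)

theorem Pr_inter_sq_le_mul_Pr2_spliced (hp : ∀ e, 0 ≤ p e ∧ p e ≤ 1) {T₂ T₁ : PairTree E}
    (hc : Continues T₂ T₁) (hS : T₁.allS) {U : Finset E} (hT₂ : T₂.valid U)
    {A M : Set (E → Bool)} (hA : T₁.Decides A) (hM : UpwardClosed M ∨ DownwardClosed M) :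
    Pr p (A ∩ M) ^ 2 ≤ Pr p A * Pr2 p {x | x.1 ∈ A ∩ M ∧ T₂.spliced x.1 x.2 ∈ A ∩ M} := by
  induction hc generalizing U A M with
  | leaf T =>
    rcases hA.leaf with rfl | rfl
    · simp
    · simpa [sq] using Pr_mul_Pr_le_Pr2_spliced hp hT₂ (hM.imp (fun h => ⟨h, h⟩) fun h => ⟨h, h⟩)
  | node e toS ch₂ ch₁ hch ih =>
    obtain ⟨rfl, hS⟩ := hS
    have hT₁ := (Continues.node e true ch₂ ch₁ hch).valid hT₂
    have hsection : ∀ b₁ b₂,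
        {x : (E → Bool) × (E → Bool) | (update x.1 e b₁, update x.2 e b₂) ∈
          {x | x.1 ∈ A ∩ M ∧ (PairTree.node e true ch₂).spliced x.1 x.2 ∈ A ∩ M}}
        = {x | x.1 ∈ {C | update C e b₁ ∈ A ∩ M} ∧
            (ch₂ b₁ b₂).spliced x.1 x.2 ∈ {C | update C e b₁ ∈ A ∩ M}} := by
      intro b₁ b₂
      ext x
      simp only [Set.mem_ofPred_eq, PairTree.spliced_node_update hT₂, if_true]
    rw [Pr_eq_sum_update e (A ∩ M), Pr_eq_sum_update e A, Pr2_eq_sum_update e]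
    simp only [hsection]
    have hw := bitWt_nonneg hp e
    have hchild : ∀ b₁ b₂, Pr p {C | update C e b₁ ∈ A ∩ M} ^ 2 ≤
        Pr p {C | update C e b₁ ∈ A} * Pr2 p {x | x.1 ∈ {C | update C e b₁ ∈ A ∩ M} ∧
          (ch₂ b₁ b₂).spliced x.1 x.2 ∈ {C | update C e b₁ ∈ A ∩ M}} := fun b₁ b₂ =>
      ih b₁ b₂ (hS b₁ b₂) (hT₂.2 b₁ b₂) (hA.child hT₁ b₁ b₂)
        (hM.imp (·.preimage_update e b₁) (·.preimage_update e b₁))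
    -- `{(a, b, l) | 0 ≤ a, 0 ≤ l, b ^ 2 ≤ a * l}` is a convex cone, so averaging keeps the bound
    have hchild_avg : ∀ b₁, Pr p {C | update C e b₁ ∈ A ∩ M} ^ 2 ≤
        Pr p {C | update C e b₁ ∈ A} * ∑ b₂, bitWt p e b₂ *
          Pr2 p {x | x.1 ∈ {C | update C e b₁ ∈ A ∩ M} ∧
            (ch₂ b₁ b₂).spliced x.1 x.2 ∈ {C | update C e b₁ ∈ A ∩ M}} := by
      intro b₁
      have := sq_sum_mul_le_sum_mul_mul_sum univ (fun b _ => hw b)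
        (fun _ _ => Pr_nonneg hp _) (fun _ _ => Pr2_nonneg hp _) fun b₂ _ => hchild b₁ b₂
      simpa only [← sum_mul, sum_bitWt, one_mul] using this
    exact sq_sum_mul_le_sum_mul_mul_sum univ (fun b _ => hw b) (fun _ _ => Pr_nonneg hp _)
      (fun _ _ => sum_nonneg fun _ _ => mul_nonneg (hw _) (Pr2_nonneg hp _)) fun b₁ _ => hchild_avg b₁

theorem decision_tree_cauchy_schwarz_general
    {V : Type*} [Fintype V] [DecidableEq V] (G : SimpleGraph V) [DecidableRel G.Adj]
    (p : G.edgeSet → ℝ) (hp : ∀ e, 0 ≤ p e ∧ p e ≤ 1)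
    (T₁ T₂ : PairTree G.edgeSet) (hT₂ : T₂.valid ∅) (hcont : Continues T₂ T₁)
    (hallS : T₁.allS)
    (A M : Set (G.edgeSet → Bool)) (hM : UpwardClosed M ∨ DownwardClosed M)
    (hT₁A : T₁.Decides A)
    (hApos : 0 < Pr p A) :
    Pr2 p {x | x.1 ∈ A ∩ M ∧ splice (T₂.buildS x.1 x.2) x.1 x.2 ∈ A ∩ M}
      ≥ (Pr p (A ∩ M)) ^ 2 / Pr p A := by
  rw [ge_iff_le, div_le_iff₀ hApos, mul_comm]
  exact Pr_inter_sq_le_mul_Pr2_spliced hp hcont hallS hT₂ hT₁A hM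

/-- Cauchy–Schwarz bound for decision trees. -/
theorem decision_tree_cauchy_schwarz
    {V : Type*} [Fintype V] [DecidableEq V] (G : SimpleGraph V) [DecidableRel G.Adj]
    (p : G.edgeSet → ℝ) (hp : ∀ e, 0 ≤ p e ∧ p e ≤ 1)
    (T₁ T₂ : PairTree G.edgeSet) (hT₂ : T₂.valid ∅) (hcont : Continues T₂ T₁)
    (hallS : T₁.allS)
    (A M : Set (G.edgeSet → Bool)) (hM : UpwardClosed M ∨ DownwardClosed M)
    (hT₁A : T₁.Decides A) (hT₂B : T₂.Decides (A ∩ M))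
    (hApos : 0 < Pr p A) :
    Pr2 p {x | x.1 ∈ A ∩ M ∧ splice (T₂.buildS x.1 x.2) x.1 x.2 ∈ A ∩ M}
      ≥ (Pr p (A ∩ M)) ^ 2 / Pr p A :=
  decision_tree_cauchy_schwarz_general G p hp T₁ T₂ hT₂ hcont hallS A M hM hT₁A hApos

end Correlation

end DTPerc
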